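/- arXiv:2307.14940 — 2 statements merged into one kernel-verified Lean document; each statement's English description precedes it below -/
import Mathlib

section
/- Let S ⊆ ℝⁿ, l : ℝⁿ → ℝ nonnegative, p : ℝⁿ → ℝ strictly positive outside S, ψ(x) = 1 - 1/(1+x), and φ(θ) = ψ(l(θ)) if θ ∈ S, else ψ(l(θ)) + p(θ). Assume for every θ ∉ S there exists ω ∈ S with l(ω) ≤ l(θ). If θ* is a global minimizer of φ on ℝⁿ, then θ* ∈ S and θ* is a global minimizer of l restricted to S. -/
/-!
On `[0, ∞)` the map `ψ x = 1 - 1/(1 + x)` is strictly increasing, so minimizing `ψ ∘ l` over `S`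
is the same as minimizing `l` over `S`. A point outside `S` pays a positive penalty on top of
`ψ ∘ l` and is matched in loss by some point of `S`, which is therefore strictly better for `φ`;
hence a global minimizer of `φ` lies in `S`, where `φ = ψ ∘ l`.
-/

open Set

lemma strictMonoOn_one_sub_one_div_one_add :
    StrictMonoOn (fun x : ℝ => 1 - 1 / (1 + x)) (Ioi (-1)) := by
  intro a ha b _ hab
  have ha' : (0 : ℝ) < 1 + a := by linarith [mem_Ioi.mp ha]
  have : 1 / (1 + b) < 1 / (1 + a) := one_div_lt_one_div_of_lt ha' (by linarith)
  simpa using this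

lemma mem_and_isMinOn_of_isMin_penalized {α : Type*} {S : Set α} {f φ : α → ℝ} {θs : α}
    (hin : EqOn φ f S) (hout : ∀ θ ∉ S, f θ < φ θ) (hω : ∀ θ ∉ S, ∃ ω ∈ S, f ω ≤ f θ)
    (hmin : ∀ θ, φ θs ≤ φ θ) :
    θs ∈ S ∧ IsMinOn f S θs := by
  have hS : θs ∈ S := by
    by_contra hθs
    obtain ⟨ω, hωS, hωθs⟩ := hω θs hθs
    have := hmin ω
    linarith [hin hωS, hout θs hθs]
  refine ⟨hS, isMinOn_iff.mpr fun θ hθ => ?_⟩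
  rw [← hin hS, ← hin hθ]
  exact hmin θ

theorem global_min_of_penalty_is_global_min_of_constrained
    (n : ℕ) (S : Set (Fin n → ℝ)) (l p : (Fin n → ℝ) → ℝ)
    (ψ : ℝ → ℝ) (hψ : ∀ x, ψ x = 1 - 1 / (1 + x))
    (φ : (Fin n → ℝ) → ℝ)
    (hφin : ∀ θ ∈ S, φ θ = ψ (l θ))
    (hφout : ∀ θ ∉ S, φ θ = ψ (l θ) + p θ)
    (hl : ∀ θ, 0 ≤ l θ) (hp : ∀ θ ∉ S, 0 < p θ)
    (hω : ∀ θ ∉ S, ∃ ω ∈ S, l ω ≤ l θ)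
    (θs : Fin n → ℝ) (hmin : ∀ θ : Fin n → ℝ, φ θs ≤ φ θ) :
    θs ∈ S ∧ ∀ θ ∈ S, l θs ≤ l θ := by
  have hψmono : StrictMonoOn ψ (Ioi (-1)) := by
    simpa only [← funext hψ] using strictMonoOn_one_sub_one_div_one_add
  have hl' : ∀ θ, l θ ∈ Ioi (-1) := fun θ => mem_Ioi.mpr (by linarith [hl θ])
  have hψlω : ∀ θ ∉ S, ∃ ω ∈ S, ψ (l ω) ≤ ψ (l θ) := fun θ hθ => by
    obtain ⟨ω, hωS, hωθ⟩ := hω θ hθ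
    exact ⟨ω, hωS, hψmono.monotoneOn (hl' ω) (hl' θ) hωθ⟩
  obtain ⟨hS, hψmin⟩ := mem_and_isMinOn_of_isMin_penalized (f := ψ ∘ l) hφin
    (fun θ hθ => by simp only [Function.comp_apply, hφout θ hθ]; linarith [hp θ hθ]) hψlω hmin
  exact ⟨hS, fun θ hθ => (hψmono.le_iff_le (hl' θs) (hl' θ)).mp (hψmin hθ)⟩
end

section
/- Under the hypotheses that l ≥ 0, p > 0 outside S, and for every infeasible point θ there exists a feasible point ω with l(ω) ≤ l(θ), a point θ* ∈ S is a global minimizer of l on S if and only if θ* is a global minimizer of the self-adaptive penalty function φ on ℝⁿ, where φ(θ) = ψ(l(θ)) for θ ∈ S and φ(θ) = ψ(l(θ)) + p(θ) otherwise, with ψ(x) = 1 - 1/(1+x). -/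
/-!
`ψ(x) = 1 - 1/(1+x)` is strictly increasing on `[0, ∞)`, so on `S` the penalty function is a
strictly increasing transform of the loss and has the same minimizers there. Off `S` the
penalty only adds `p ≥ 0`, and every infeasible point is dominated in loss by a feasible one,
so a minimizer of the loss over `S` also beats every infeasible point.
-/

open Set

section Penalty

variable {α : Type*} {S : Set α} {l p φ : α → ℝ} {g : ℝ → ℝ} {s : Set ℝ} {θs : α}

lemma isMinOn_penalty_of_isMinOn (hg : MonotoneOn g s) (hl : ∀ θ, l θ ∈ s)
    (hφin : ∀ θ ∈ S, φ θ = g (l θ)) (hφout : ∀ θ ∉ S, φ θ = g (l θ) + p θ)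
    (hp : ∀ θ ∉ S, 0 ≤ p θ) (hω : ∀ θ ∉ S, ∃ ω ∈ S, l ω ≤ l θ) (hθs : θs ∈ S)
    (h : IsMinOn l S θs) : IsMinOn φ univ θs := by
  rw [isMinOn_univ_iff]
  intro θ
  by_cases hθ : θ ∈ S
  · rw [hφin θs hθs, hφin θ hθ]
    exact hg (hl θs) (hl θ) (h hθ)
  · obtain ⟨ω, hωS, hωθ⟩ := hω θ hθ
    calc φ θs = g (l θs) := hφin θs hθs
      _ ≤ g (l θ) := hg (hl θs) (hl θ) ((isMinOn_iff.mp h ω hωS).trans hωθ)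
      _ ≤ g (l θ) + p θ := le_add_of_nonneg_right (hp θ hθ)
      _ = φ θ := (hφout θ hθ).symm

lemma isMinOn_of_isMinOn_penalty (hg : StrictMonoOn g s) (hl : ∀ θ, l θ ∈ s)
    (hφin : ∀ θ ∈ S, φ θ = g (l θ)) (hθs : θs ∈ S) (h : IsMinOn φ S θs) :
    IsMinOn l S θs := by
  intro θ hθ
  have hφ : φ θs ≤ φ θ := h hθ
  rw [hφin θs hθs, hφin θ hθ] at hφ
  exact (hg.le_iff_le (hl θs) (hl θ)).mp hφ

lemma isMinOn_iff_isMinOn_penalty (hg : StrictMonoOn g s) (hl : ∀ θ, l θ ∈ s)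
    (hφin : ∀ θ ∈ S, φ θ = g (l θ)) (hφout : ∀ θ ∉ S, φ θ = g (l θ) + p θ)
    (hp : ∀ θ ∉ S, 0 ≤ p θ) (hω : ∀ θ ∉ S, ∃ ω ∈ S, l ω ≤ l θ) (hθs : θs ∈ S) :
    IsMinOn l S θs ↔ IsMinOn φ univ θs :=
  ⟨isMinOn_penalty_of_isMinOn hg.monotoneOn hl hφin hφout hp hω hθs,
    fun h => isMinOn_of_isMinOn_penalty hg hl hφin hθs (h.on_subset (subset_univ S))⟩

end Penalty

theorem constrained_min_iff_penalty_min_general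
    (n : ℕ) (S : Set (Fin n → ℝ)) (l p : (Fin n → ℝ) → ℝ)
    (ψ : ℝ → ℝ) (hψ : ∀ x, ψ x = 1 - 1 / (1 + x))
    (φ : (Fin n → ℝ) → ℝ)
    (hφin : ∀ θ ∈ S, φ θ = ψ (l θ))
    (hφout : ∀ θ ∉ S, φ θ = ψ (l θ) + p θ)
    (hl : ∀ θ, 0 ≤ l θ) (hp : ∀ θ ∉ S, 0 < p θ)
    (hω : ∀ θ ∉ S, ∃ ω ∈ S, l ω ≤ l θ)
    (θs : Fin n → ℝ) (hθsS : θs ∈ S) :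
    (∀ θ ∈ S, l θs ≤ l θ) ↔ (∀ θ : Fin n → ℝ, φ θs ≤ φ θ) := by
  obtain rfl : ψ = fun x => 1 - 1 / (1 + x) := funext hψ
  rw [← isMinOn_iff, ← isMinOn_univ_iff]
  exact isMinOn_iff_isMinOn_penalty strictMonoOn_one_sub_one_div_one_add
    (fun θ => mem_Ioi.mpr (by linarith [hl θ])) hφin hφout (fun θ hθ => (hp θ hθ).le) hω hθsS

theorem constrained_min_iff_penalty_min
    (n : ℕ) (S : Set (Fin n → ℝ)) (l p : (Fin n → ℝ) → ℝ)
    (ψ : ℝ → ℝ) (hψ : ∀ x, ψ x = 1 - 1 / (1 + x))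
    (φ : (Fin n → ℝ) → ℝ)
    (hφin : ∀ θ ∈ S, φ θ = ψ (l θ))
    (hφout : ∀ θ ∉ S, φ θ = ψ (l θ) + p θ)
    (hl : ∀ θ, 0 ≤ l θ) (hp0 : ∀ θ, 0 ≤ p θ) (hp : ∀ θ ∉ S, 0 < p θ)
    (hω : ∀ θ ∉ S, ∃ ω ∈ S, l ω ≤ l θ)
    (θs : Fin n → ℝ) (hθsS : θs ∈ S) :
    (∀ θ ∈ S, l θs ≤ l θ) ↔ (∀ θ : Fin n → ℝ, φ θs ≤ φ θ) :=
  constrained_min_iff_penalty_min_general n S l p ψ hψ φ hφin hφout hl hp hω θs hθsS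
end
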